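/- arXiv:2603.06345 — 3 statements merged into one kernel-verified Lean document; each statement's English description precedes it below -/
import Mathlib

section
/- If M is a minimal matrix proof (a matrix with a spanning set of connections such that no strict subset of M has a spanning set of connections), then every literal occurring in a clause of M is connected to at least one literal in a different clause of M. -/
/-- A path through a matrix `M` (a finite set of clauses) assigns to each
clause a literal chosen from it. -/
def IsPath {L : Type*} (M : Finset (Finset L)) (p : Finset L → L) : Prop :=
  ∀ C ∈ M, p C ∈ C

/-- A path is closed (w.r.t. connection relation `R`) if it contains a
connected pair of literals from distinct clauses. -/
def ClosedPath {L : Type*} (R : L → L → Prop) (M : Finset (Finset L))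
    (p : Finset L → L) : Prop :=
  ∃ C ∈ M, ∃ D ∈ M, C ≠ D ∧ R (p C) (p D)

/-- `M` has a spanning set of connections (is a matrix proof) if every path
through `M` is closed. -/
def Spanning {L : Type*} (R : L → L → Prop) (M : Finset (Finset L)) : Prop :=
  ∀ p, IsPath M p → ClosedPath R M p

/-! Deleting a clause `C` from a minimal matrix proof leaves an open path; re-entering `C`
through any literal `l ∈ C` gives a path through the whole matrix, which must be closed, and
since the old part is open the closing connection has `l` as one of its ends. -/

section

open Function

variable {L : Type*} [DecidableEq L] {R : L → L → Prop} {M : Finset (Finset L)}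
  {C : Finset L} {p : Finset L → L} {l : L}

lemma IsPath.update_erase (hp : IsPath (M.erase C) p) (hl : l ∈ C) :
    IsPath M (update p C l) := by
  intro D hD
  by_cases hDC : D = C
  · subst hDC
    simpa using hl
  · simpa [hDC] using hp D (Finset.mem_erase.mpr ⟨hDC, hD⟩)

lemma exists_open_path_erase (hmin : ¬ Spanning R (M.erase C)) :
    ∃ p, IsPath (M.erase C) p ∧ ¬ ClosedPath R (M.erase C) p := by
  simpa [Spanning] using hmin

lemma ClosedPath.exists_connected_of_update (hclosed : ClosedPath R M (update p C l))
    (hopen : ¬ ClosedPath R (M.erase C) p) :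
    ∃ D ∈ M, D ≠ C ∧ (R l (p D) ∨ R (p D) l) := by
  obtain ⟨D₁, hD₁, D₂, hD₂, hne, hR⟩ := hclosed
  by_cases h₁ : D₁ = C
  · subst h₁
    exact ⟨D₂, hD₂, hne.symm, .inl (by simpa [hne.symm] using hR)⟩
  by_cases h₂ : D₂ = C
  · subst h₂
    exact ⟨D₁, hD₁, hne, .inr (by simpa [hne] using hR)⟩
  exact (hopen ⟨D₁, Finset.mem_erase.mpr ⟨h₁, hD₁⟩, D₂, Finset.mem_erase.mpr ⟨h₂, hD₂⟩,
    hne, by simpa [h₁, h₂] using hR⟩).elim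

end

/-- A minimal matrix proof is fully connected: every literal of every clause
is connected to some literal of a different clause. -/
theorem minimal_matrix_proof_fully_connected {L : Type*}
    (R : L → L → Prop) (M : Finset (Finset L))
    (hproof : Spanning R M)
    (hmin : ∀ M' : Finset (Finset L), M' ⊂ M → ¬ Spanning R M') :
    ∀ C ∈ M, ∀ l ∈ C, ∃ D ∈ M, D ≠ C ∧ ∃ k ∈ D, R l k ∨ R k l := by
  classical
  intro C hC l hl
  obtain ⟨p, hp, hopen⟩ := exists_open_path_erase (hmin _ (Finset.erase_ssubset hC))
  have hpath := hp.update_erase hl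
  obtain ⟨D, hD, hDC, hR⟩ := (hproof _ hpath).exists_connected_of_update hopen
  exact ⟨D, hD, hDC, p D, hp D (Finset.mem_erase.mpr ⟨hDC, hD⟩), hR⟩
end

section
/- If a matrix M has a spanning set of connections and L is a literal in some clause C of M that participates in no connection, then the matrix M \ {C} also has a spanning set of connections. -/
/-! A path through `M \ {C}` extends to a path through `M` by choosing `l` in `C`; when `l` is
unconnected, any connection closing the extended path avoids `C`, so it already closes the
original path. -/

section

variable {L : Type*} [DecidableEq L] {M : Finset (Finset L)} {C : Finset L} {l : L}
  {p : Finset L → L}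

theorem IsPath.update_of_erase (hp : IsPath (M.erase C) p) (hl : l ∈ C) :
    IsPath M (Function.update p C l) := by
  intro D hD
  rcases eq_or_ne D C with rfl | hDC
  · simpa using hl
  · rw [Function.update_of_ne hDC]
    exact hp D (Finset.mem_erase.mpr ⟨hDC, hD⟩)

theorem ClosedPath.erase_of_update_of_unconnected {R : L → L → Prop}
    (hclosed : ClosedPath R M (Function.update p C l)) (hno : ∀ k : L, ¬ R l k ∧ ¬ R k l) :
    ClosedPath R (M.erase C) p := by
  obtain ⟨D, hD, E, hE, hDE, hR⟩ := hclosed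
  have hDC : D ≠ C := by
    rintro rfl
    exact (hno _).1 (by simpa using hR)
  have hEC : E ≠ C := by
    rintro rfl
    exact (hno _).2 (by simpa using hR)
  rw [Function.update_of_ne hDC, Function.update_of_ne hEC] at hR
  exact ⟨D, Finset.mem_erase.mpr ⟨hDC, hD⟩, E, Finset.mem_erase.mpr ⟨hEC, hE⟩, hDE, hR⟩

end

theorem remove_clause_of_unconnected_literal_general {L : Type*} [DecidableEq L]
    (R : L → L → Prop) (M : Finset (Finset L))
    (hspan : Spanning R M)
    (C : Finset L) (l : L) (hl : l ∈ C)
    (hno : ∀ k : L, ¬ R l k ∧ ¬ R k l) :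
    Spanning R (M.erase C) :=
  fun _ hp => (hspan _ (hp.update_of_erase hl)).erase_of_update_of_unconnected hno

/-- If `M` has a spanning set of connections and `l ∈ C ∈ M` participates in
no connection, then `M \ {C}` also has a spanning set of connections. -/
theorem remove_clause_of_unconnected_literal {L : Type*} [DecidableEq L]
    (R : L → L → Prop) (M : Finset (Finset L))
    (hspan : Spanning R M)
    (C : Finset L) (hC : C ∈ M) (l : L) (hl : l ∈ C)
    (hno : ∀ k : L, ¬ R l k ∧ ¬ R k l) :
    Spanning R (M.erase C) :=
  remove_clause_of_unconnected_literal_general R M hspan C l hl hno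
end

section
/- A finite nonempty set M of nonempty ground clauses is propositionally unsatisfiable if and only if every path through M (choice of one literal per clause) contains a complementary pair of literals. -/
/-- A ground literal over atoms `A`: a polarity and an atom. -/
abbrev GrLit (A : Type*) : Type _ := Bool × A

/-- Dual ground literals: same atom, opposite polarity. -/
def GrDual {A : Type*} (l k : GrLit A) : Prop := l.1 ≠ k.1 ∧ l.2 = k.2

/-- A valuation satisfies a literal if it makes it true. -/
def SatLit {A : Type*} (v : A → Prop) (l : GrLit A) : Prop :=
  if l.1 then v l.2 else ¬ v l.2

/-- A valuation satisfies a clause set if in each clause some literal is true. -/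
def SatMatrix {A : Type*} (v : A → Prop) (M : Finset (Finset (GrLit A))) : Prop :=
  ∀ C ∈ M, ∃ l ∈ C, SatLit v l

theorem IsPath.exists_forall_of_forall_exists {L : Type*} {M : Finset (Finset L)} {P : L → Prop}
    (hM : M.Nonempty) (h : ∀ C ∈ M, ∃ l ∈ C, P l) :
    ∃ p, IsPath M p ∧ ∀ C ∈ M, P (p C) := by
  obtain ⟨l₀, -, -⟩ := h _ hM.choose_spec
  have hchoice : ∀ C, ∃ l, C ∈ M → l ∈ C ∧ P l := fun C => by
    by_cases hC : C ∈ M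
    · obtain ⟨l, hl⟩ := h C hC
      exact ⟨l, fun _ => hl⟩
    · exact ⟨l₀, fun h => absurd h hC⟩
  choose p hp using hchoice
  exact ⟨p, fun C hC => (hp C hC).1, fun C hC => (hp C hC).2⟩

theorem not_grDual_of_satLit {A : Type*} {v : A → Prop} {l k : GrLit A}
    (hl : SatLit v l) (hk : SatLit v k) : ¬ GrDual l k := by
  rintro ⟨hpol, hatom⟩
  obtain ⟨b, a⟩ := l
  obtain ⟨c, a'⟩ := k
  cases b <;> cases c <;> simp_all [SatLit]

def pathValuation {A : Type*} (M : Finset (Finset (GrLit A))) (p : Finset (GrLit A) → GrLit A) :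
    A → Prop :=
  fun a => ∃ C ∈ M, p C = (true, a)

theorem satLit_pathValuation {A : Type*} {M : Finset (Finset (GrLit A))}
    {p : Finset (GrLit A) → GrLit A} (hopen : ¬ ClosedPath GrDual M p) {C : Finset (GrLit A)}
    (hC : C ∈ M) : SatLit (pathValuation M p) (p C) := by
  obtain ⟨⟨b, a⟩, hpC⟩ : ∃ l, p C = l := ⟨_, rfl⟩
  rw [hpC]
  cases b
  · rintro ⟨D, hD, hpD⟩
    refine hopen ⟨C, hC, D, hD, ?_, ?_⟩
    · rintro rfl
      simp [hpC] at hpD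
    · simp [GrDual, hpC, hpD]
  · exact ⟨C, hC, hpC⟩

theorem satMatrix_pathValuation {A : Type*} {M : Finset (Finset (GrLit A))}
    {p : Finset (GrLit A) → GrLit A} (hp : IsPath M p) (hopen : ¬ ClosedPath GrDual M p) :
    SatMatrix (pathValuation M p) M :=
  fun C hC => ⟨p C, hp C hC, satLit_pathValuation hopen hC⟩

theorem unsat_iff_spanning_general {A : Type*}
    (M : Finset (Finset (GrLit A)))
    (hM : M.Nonempty) :
    (¬ ∃ v : A → Prop, SatMatrix v M) ↔ Spanning GrDual M := by
  constructor
  · intro hunsat p hp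
    by_contra hopen
    exact hunsat ⟨_, satMatrix_pathValuation hp hopen⟩
  · rintro hspan ⟨v, hv⟩
    obtain ⟨p, hp, hsat⟩ := IsPath.exists_forall_of_forall_exists hM hv
    obtain ⟨C, hC, D, hD, -, hdual⟩ := hspan p hp
    exact not_grDual_of_satLit (hsat C hC) (hsat D hD) hdual

/-- A finite nonempty set of nonempty ground clauses is propositionally
unsatisfiable iff every path through it contains a complementary pair. -/
theorem unsat_iff_spanning {A : Type*}
    (M : Finset (Finset (GrLit A)))
    (hM : M.Nonempty) (hne : ∀ C ∈ M, C.Nonempty) :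
    (¬ ∃ v : A → Prop, SatMatrix v M) ↔ Spanning GrDual M :=
  unsat_iff_spanning_general M hM
end
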